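/- For every k > 0, R > 0 and δ > 0, there exists a constant C > 0, independent of ℓ, such that for every ℓ ∈ ℕ: ∫_R^∞ |h_ℓ(ikr)|² dr ≤ C ∫_R^{R+δ} |h_ℓ(ikr)|² dr (in particular the left-hand integral is finite). -/

import Mathlib

open Complex MeasureTheory Set

/-- The Rayleigh derivative operator `D f = x ↦ f'(x)/x`. -/
noncomputable def raylD (f : ℂ → ℂ) : ℂ → ℂ := fun x => deriv f x / x

/-- Spherical Hankel function of the first kind `h_ℓ(x) = -i (-x)^ℓ Dˡ(e^{ix}/x)`. -/
noncomputable def sphH (l : ℕ) (x : ℂ) : ℂ :=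
  -Complex.I * ((-x) ^ l * (raylD^[l] (fun y => Complex.exp (Complex.I * y) / y)) x)

open Polynomial in
/-- Complex polynomial with `raylD^[l] (e^{ix}/x) = e^{ix} x^{-(2l+1)} pC_l(x)`. -/
noncomputable def pC : ℕ → Polynomial ℂ
  | 0 => 1
  | l+1 => Complex.I • (X * pC l) - ((2*l+1 : ℂ)) • (pC l) + X * derivative (pC l)

open Polynomial in
/-- Real counterpart of `pC` with nonnegative coefficients. -/
noncomputable def qR : ℕ → Polynomial ℝ
  | 0 => 1
  | l+1 => (X + C (2*(l:ℝ)+1)) * qR l - X * derivative (qR l)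

section auxlemmas
open Polynomial

lemma qR_coeff (l : ℕ) : (∀ j, 0 ≤ (qR l).coeff j) ∧ (∀ j, l < j → (qR l).coeff j = 0) := by
  induction l with
  | zero =>
    refine ⟨fun j => ?_, fun j hj => ?_⟩
    · rcases Nat.eq_zero_or_pos j with h | h
      · simp [qR, h]
      · simp [qR, coeff_one, Nat.pos_iff_ne_zero.mp h]
    · simp [qR, coeff_one, Nat.pos_iff_ne_zero.mp hj]
  | succ l ih =>
    obtain ⟨h1, h2⟩ := ih
    have key : ∀ j : ℕ, (qR (l+1)).coeff j
        = (if j = 0 then 0 else (qR l).coeff (j-1)) + (2*l+1 - j) * (qR l).coeff j := by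
      intro j
      match j with
      | 0 =>
        simp [qR, coeff_derivative, mul_comm]
      | j+1 =>
        simp only [qR, add_mul, coeff_sub, coeff_add, coeff_X_mul, coeff_C_mul,
          coeff_derivative, Nat.add_sub_cancel, if_neg (Nat.succ_ne_zero j)]
        push_cast
        ring
    constructor
    · intro j
      rw [key]
      have hb : (0:ℝ) ≤ if j = 0 then 0 else (qR l).coeff (j-1) := by
        split <;> simp [h1]
      rcases le_or_gt j l with hj | hj
      · have hc : (0:ℝ) ≤ 2*l+1 - j := by
          have : (j:ℝ) ≤ l := by exact_mod_cast hj
          linarith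
        have := mul_nonneg hc (h1 j)
        linarith
      · rw [h2 j hj]
        simpa using hb
    · intro j hj
      rw [key, h2 j (by omega)]
      have : ¬ (j = 0) := by omega
      rw [if_neg this, h2 (j-1) (by omega)]
      ring

lemma pC_eq (l : ℕ) :
    pC l = C ((-1:ℂ)^l) * ((qR l).map (algebraMap ℝ ℂ)).comp (C (-Complex.I) * X) := by
  induction l with
  | zero => simp [pC, qR]
  | succ l ih =>
    have hd : derivative (pC l)
        = C ((-1:ℂ)^l) * ((derivative ((qR l).map (algebraMap ℝ ℂ))).comp (C (-Complex.I) * X)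
            * C (-Complex.I)) := by
      rw [ih, derivative_mul, derivative_C, zero_mul, zero_add, derivative_comp]
      rw [derivative_mul, derivative_C, derivative_X]
      ring
    show Complex.I • (X * pC l) - ((2*(l:ℂ)+1)) • (pC l) + X * derivative (pC l) = _
    rw [hd, ih]
    rw [qR.eq_2]
    have hm : (algebraMap ℝ ℂ) (2*(l:ℝ)+1) = (2*(l:ℂ)+1) := by
      simp [Algebra.algebraMap_eq_smul_one]
    simp only [Polynomial.map_sub, Polynomial.map_mul, Polynomial.map_add, Polynomial.map_X,
      Polynomial.map_C, derivative_map, sub_comp, mul_comp, add_comp, X_comp, C_comp,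
      smul_eq_C_mul, hm, pow_succ, map_mul, map_pow, map_neg, map_one]
    ring

lemma raylD_formula (l : ℕ) :
    ∀ x : ℂ, x ≠ 0 → raylD^[l] (fun y => Complex.exp (Complex.I * y) / y) x
      = Complex.exp (Complex.I * x) * x ^ (-(2*(l:ℤ))-1) * (pC l).eval x := by
  induction l with
  | zero =>
    intro x hx
    simp [pC, div_eq_mul_inv, zpow_neg]
  | succ l ih =>
    intro x hx
    rw [Function.iterate_succ_apply']
    set f : ℂ → ℂ := fun y => Complex.exp (Complex.I * y) / y with hf
    set n : ℤ := -(2*(l:ℤ))-1 with hn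
    set g : ℂ → ℂ := fun y => Complex.exp (Complex.I * y) * y ^ n * (pC l).eval y with hg
    have hEq : raylD^[l] f =ᶠ[nhds x] g := by
      filter_upwards [eventually_ne_nhds hx] with y hy using ih y hy
    have h1 : HasDerivAt (fun y : ℂ => Complex.exp (Complex.I * y))
        (Complex.exp (Complex.I * x) * Complex.I) x :=
      HasDerivAt.cexp (by simpa using (hasDerivAt_id x).const_mul Complex.I)
    have h2 : HasDerivAt (fun y : ℂ => y ^ n) ((n:ℂ) * x ^ (n-1)) x :=
      hasDerivAt_zpow n x (Or.inl hx)
    have h3 : HasDerivAt (fun y : ℂ => (pC l).eval y) ((derivative (pC l)).eval x) x :=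
      (pC l).hasDerivAt x
    have hgd : HasDerivAt g
        ((Complex.exp (Complex.I * x) * Complex.I * x ^ n
          + Complex.exp (Complex.I * x) * ((n:ℂ) * x ^ (n-1))) * (pC l).eval x
          + Complex.exp (Complex.I * x) * x ^ n * (derivative (pC l)).eval x) x :=
      (h1.mul h2).mul h3
    have hd : deriv (raylD^[l] f) x = deriv g x := hEq.deriv_eq
    rw [raylD, hd, hgd.deriv]
    have hev : (pC (l+1)).eval x = Complex.I * (x * (pC l).eval x)
        - (2*(l:ℂ)+1) * (pC l).eval x + x * (derivative (pC l)).eval x := by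
      simp [pC]
    rw [hev]
    have hcast : ((n:ℤ):ℂ) = -(2*(l:ℂ)+1) := by rw [hn]; push_cast; ring
    have e1 : x ^ (n-1) = x ^ n / x := by
      rw [zpow_sub₀ hx, zpow_one]
    have e2 : x ^ (-(2*((l:ℤ)+1))-1) = x ^ n / x^2 := by
      rw [show -(2*((l:ℤ)+1))-1 = n - 2 by rw [hn]; ring, zpow_sub₀ hx]
      norm_cast
    push_cast
    rw [e1, e2, hcast]
    field_simp
    ring

lemma pC_eval (l : ℕ) (t : ℝ) :
    (pC l).eval (Complex.I * t) = (-1:ℂ)^l * Complex.ofReal ((qR l).eval t) := by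
  rw [pC_eq]
  have h1 : eval (Complex.I * (t:ℂ)) (C (-Complex.I) * X) = algebraMap ℝ ℂ t := by
    simp [Complex.ext_iff]
  rw [eval_mul, eval_comp, h1, eval_C, eval_map, eval₂_at_apply]
  norm_num

lemma qR_eval_nonneg (l : ℕ) (t : ℝ) (ht : 0 ≤ t) : 0 ≤ (qR l).eval t := by
  rw [eval_eq_sum_range]
  exact Finset.sum_nonneg fun i _ => mul_nonneg ((qR_coeff l).1 i) (pow_nonneg ht i)

lemma qR_natDegree (l : ℕ) : (qR l).natDegree ≤ l :=
  natDegree_le_iff_coeff_eq_zero.mpr fun m hm => (qR_coeff l).2 m hm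

lemma qR_antitone (l : ℕ) {t s : ℝ} (ht : 0 < t) (hts : t ≤ s) :
    (qR l).eval s / s^(l+1) ≤ (qR l).eval t / t^(l+1) := by
  have hs : 0 < s := lt_of_lt_of_le ht hts
  rw [div_le_div_iff₀ (pow_pos hs _) (pow_pos ht _)]
  rw [eval_eq_sum_range' (Nat.lt_succ_of_le (qR_natDegree l)) s,
      eval_eq_sum_range' (Nat.lt_succ_of_le (qR_natDegree l)) t,
      Finset.sum_mul, Finset.sum_mul]
  refine Finset.sum_le_sum fun j hj => ?_
  have hjl : j ≤ l := Nat.lt_succ_iff.mp (Finset.mem_range.mp hj)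
  have key : s^j * t^(l+1) ≤ t^j * s^(l+1) := by
    have e : l + 1 = j + (l+1-j) := by omega
    rw [e, pow_add t, pow_add s]
    calc s^j * (t^j * t^(l+1-j)) = (s^j * t^j) * t^(l+1-j) := by ring
      _ ≤ (s^j * t^j) * s^(l+1-j) := by
          exact mul_le_mul_of_nonneg_left (pow_le_pow_left₀ ht.le hts _)
            (mul_nonneg (pow_nonneg hs.le _) (pow_nonneg ht.le _))
      _ = t^j * (s^j * s^(l+1-j)) := by ring
  calc (qR l).coeff j * s^j * t^(l+1) = (qR l).coeff j * (s^j * t^(l+1)) := by ring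
    _ ≤ (qR l).coeff j * (t^j * s^(l+1)) := mul_le_mul_of_nonneg_left key ((qR_coeff l).1 j)
    _ = (qR l).coeff j * t^j * s^(l+1) := by ring

lemma sphH_norm (l : ℕ) (t : ℝ) (ht : 0 < t) :
    ‖sphH l (Complex.I * t)‖ = Real.exp (-t) * (qR l).eval t / t^(l+1) := by
  have hx : (Complex.I * (t:ℂ)) ≠ 0 :=
    mul_ne_zero Complex.I_ne_zero (Complex.ofReal_ne_zero.mpr ht.ne')
  rw [sphH, raylD_formula l _ hx, pC_eval]
  have he : Complex.I * (Complex.I * (t:ℂ)) = Complex.ofReal (-t) := by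
    rw [← mul_assoc, Complex.I_mul_I]; push_cast; ring
  rw [he]
  have h4 : ‖(-1:ℂ)^l * Complex.ofReal ((qR l).eval t)‖ = (qR l).eval t := by
    rw [norm_mul, norm_pow]
    simp [_root_.abs_of_nonneg (qR_eval_nonneg l t ht.le)]
  rw [norm_mul, norm_mul, norm_mul, h4]
  simp only [norm_neg, norm_pow, norm_zpow, norm_mul, Complex.norm_I, Complex.norm_exp,
    Complex.norm_real, Complex.ofReal_re, Real.norm_eq_abs, abs_of_pos ht, one_mul, one_pow]
  have h3 : t^(l:ℕ) * t^(-(2*(l:ℤ))-1) = (t^(l+1))⁻¹ := by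
    rw [← zpow_natCast t l, ← zpow_add₀ ht.ne']
    rw [show (l:ℤ) + (-(2*(l:ℤ))-1) = -((l:ℤ)+1) by ring, zpow_neg]
    norm_cast
  calc t^l * (Real.exp (-t) * t^(-(2*(l:ℤ))-1) * (qR l).eval t)
      = Real.exp (-t) * (qR l).eval t * (t^(l:ℕ) * t^(-(2*(l:ℤ))-1)) := by ring
    _ = Real.exp (-t) * (qR l).eval t / t^(l+1) := by rw [h3]; ring


end auxlemmas

open Polynomial in
/-- for every `k > 0`, `R > 0` and `δ > 0`, there is `C > 0`,
independent of `ℓ`, such that `∫_R^∞ |h_ℓ(ikr)|² dr ≤ C ∫_R^{R+δ} |h_ℓ(ikr)|² dr`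
for all `ℓ`, the left-hand integral being finite. -/
theorem stmt_12 (k R δ : ℝ) (hk : 0 < k) (hR : 0 < R) (hδ : 0 < δ) :
    ∃ C : ℝ, 0 < C ∧
      ∀ l : ℕ,
        IntegrableOn (fun r : ℝ => ‖sphH l (Complex.I * k * r)‖ ^ 2) (Ioi R) volume ∧
        (∫ r in Ioi R, ‖sphH l (Complex.I * k * r)‖ ^ 2)
          ≤ C * ∫ r in R..(R + δ), ‖sphH l (Complex.I * k * r)‖ ^ 2 := by
  set q : ℝ := Real.exp (-(2*k*δ)) with hqdef
  have hq0 : 0 < q := Real.exp_pos _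
  have hq1 : q < 1 := Real.exp_lt_one_iff.mpr (by nlinarith)
  have h1q : 0 < 1 - q := by linarith
  refine ⟨1/(1-q), by positivity, fun l => ?_⟩
  -- the explicit nonnegative profile
  set ψ : ℝ → ℝ := fun r => Real.exp (-(k*r)) * (qR l).eval (k*r) / (k*r)^(l+1) with hψdef
  set φ : ℝ → ℝ := fun r => (ψ r)^2 with hφdef
  have hψ_nonneg : ∀ r : ℝ, 0 < r → 0 ≤ ψ r := fun r hr => by
    have : (0:ℝ) < k*r := by positivity
    have := qR_eval_nonneg l (k*r) this.le
    positivity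
  -- equality with the sphH integrand
  have hEq : ∀ r : ℝ, 0 < r → ‖sphH l (Complex.I * k * r)‖^2 = φ r := by
    intro r hr
    have harg : (Complex.I * (k:ℝ) * (r:ℝ) : ℂ) = Complex.I * ((k*r : ℝ) : ℂ) := by
      push_cast; ring
    rw [harg, sphH_norm l (k*r) (by positivity)]
  -- exponential decay of ψ
  have hdecay : ∀ r s : ℝ, 0 < r → r ≤ s → ψ s ≤ Real.exp (-(k*(s-r))) * ψ r := by
    intro r s hr hrs
    have hkr : 0 < k*r := by positivity
    have hkrs : k*r ≤ k*s := by nlinarith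
    have h1 : ψ s = Real.exp (-(k*s)) * ((qR l).eval (k*s) / (k*s)^(l+1)) := by
      rw [hψdef]; ring
    have h2 : Real.exp (-(k*(s-r))) * ψ r
        = Real.exp (-(k*s)) * ((qR l).eval (k*r) / (k*r)^(l+1)) := by
      rw [hψdef]
      rw [show -(k*s) = -(k*(s-r)) + -(k*r) by ring, Real.exp_add]
      ring
    rw [h1, h2]
    exact mul_le_mul_of_nonneg_left (qR_antitone l hkr hkrs) (Real.exp_pos _).le
  have hdecay2 : ∀ r s : ℝ, 0 < r → r ≤ s → φ s ≤ Real.exp (-(2*k*(s-r))) * φ r := by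
    intro r s hr hrs
    have h := hdecay r s hr hrs
    have hs0 : 0 ≤ ψ s := hψ_nonneg s (lt_of_lt_of_le hr hrs)
    have he : Real.exp (-(2*k*(s-r))) = (Real.exp (-(k*(s-r))))^2 := by
      rw [sq, ← Real.exp_add]; ring_nf
    calc (ψ s)^2 ≤ (Real.exp (-(k*(s-r))) * ψ r)^2 := by nlinarith [hψ_nonneg r hr]
      _ = Real.exp (-(2*k*(s-r))) * (ψ r)^2 := by rw [he]; ring
  -- continuity of φ on (0, ∞)
  have hcont : ContinuousOn φ (Ioi 0) := by
    apply ContinuousOn.pow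
    apply ContinuousOn.div
    · exact ((Real.continuous_exp.comp (continuous_const.mul continuous_id).neg).mul
        ((qR l).continuous.comp (continuous_const.mul continuous_id))).continuousOn
    · exact ((continuous_const.mul continuous_id).pow _).continuousOn
    · intro r hr
      have h0 : (0:ℝ) < k*r := mul_pos hk hr
      positivity
  have hsub : Ioi R ⊆ Ioi 0 := fun r hr => lt_trans hR hr
  -- integrability of φ on Ioi R
  have hmeas : AEStronglyMeasurable φ (volume.restrict (Ioi R)) :=
    (hcont.mono hsub).aestronglyMeasurable measurableSet_Ioi
  have h2k : (0:ℝ) < 2*k := by linarith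
  have hbound : ∀ r ∈ Ioi R, ‖φ r‖ ≤ (φ R * Real.exp (2*k*R)) * Real.exp (-(2*k)*r) := by
    intro r hr
    have h := hdecay2 R r hR (le_of_lt hr)
    rw [Real.norm_of_nonneg (sq_nonneg _)]
    have harg : -(2*k*(r-R)) = 2*k*R + -(2*k)*r := by ring
    calc φ r ≤ Real.exp (-(2*k*(r-R))) * φ R := h
      _ = (φ R * Real.exp (2*k*R)) * Real.exp (-(2*k)*r) := by
          rw [harg, Real.exp_add]; ring
  have hIntφ : IntegrableOn φ (Ioi R) := by
    apply Integrable.mono' ((exp_neg_integrableOn_Ioi R h2k).const_mul (φ R * Real.exp (2*k*R)))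
      hmeas
    exact (ae_restrict_iff' measurableSet_Ioi).mpr (Filter.Eventually.of_forall hbound)
  have hEqOn : EqOn (fun r : ℝ => ‖sphH l (Complex.I * k * r)‖^2) φ (Ioi R) :=
    fun r hr => hEq r (hR.trans hr)
  have hIntS : IntegrableOn (fun r : ℝ => ‖sphH l (Complex.I * k * r)‖^2) (Ioi R) volume :=
    hIntφ.congr ((ae_restrict_iff' measurableSet_Ioi).mpr
      (Filter.Eventually.of_forall (fun r hr => (hEq r (hR.trans hr)).symm)))
  -- interval integrability
  have hII : ∀ a b : ℝ, 0 < a → a ≤ b → IntervalIntegrable φ volume a b := by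
    intro a b ha hab
    apply (hcont.mono ?_).intervalIntegrable
    rw [uIcc_of_le hab]
    exact fun x hx => lt_of_lt_of_le ha hx.1
  set J : ℝ := ∫ r in R..(R+δ), φ r with hJ
  have hJ0 : 0 ≤ J :=
    intervalIntegral.integral_nonneg (by linarith) (fun x hx => sq_nonneg _)
  -- bound on each piece
  have hpiece : ∀ n : ℕ, ∫ r in (R+n*δ)..(R+(n+1)*δ), φ r ≤ q^n * J := by
    intro n
    have hn0 : (0:ℝ) ≤ (n:ℝ) := n.cast_nonneg
    have ha : (0:ℝ) < R+(n:ℝ)*δ := by nlinarith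
    have hab : R+(n:ℝ)*δ ≤ R+((n:ℝ)+1)*δ := by nlinarith
    have h1 : ∫ r in R..(R+δ), φ (r + n*δ) = ∫ r in (R+n*δ)..(R+(n+1)*δ), φ r := by
      rw [intervalIntegral.integral_comp_add_right φ ((n:ℝ)*δ)]
      rw [show R+δ+(n:ℝ)*δ = R+((n:ℝ)+1)*δ by ring]
    rw [← h1]
    have hInt1 : IntervalIntegrable (fun r => φ (r + n*δ)) volume R (R+δ) := by
      have h := (hII (R+(n:ℝ)*δ) (R+((n:ℝ)+1)*δ) ha hab).comp_add_right ((n:ℝ)*δ)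
      have e1 : R+(n:ℝ)*δ - (n:ℝ)*δ = R := by ring
      have e2 : R+((n:ℝ)+1)*δ - (n:ℝ)*δ = R+δ := by ring
      rwa [e1, e2] at h
    have hInt2 : IntervalIntegrable (fun r => q^n * φ r) volume R (R+δ) :=
      (hII R (R+δ) hR (by linarith)).const_mul _
    have hmono : ∀ x ∈ Icc R (R+δ), φ (x + n*δ) ≤ q^n * φ x := by
      intro x hx
      have hx0 : 0 < x := lt_of_lt_of_le hR hx.1
      have h := hdecay2 x (x + n*δ) hx0 (by nlinarith [n.cast_nonneg (α := ℝ)])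
      have hqn : Real.exp (-(2*k*((x + n*δ) - x))) = q^n := by
        rw [hqdef, ← Real.exp_nat_mul]
        congr 1; ring
      calc φ (x + n*δ) ≤ Real.exp (-(2*k*((x + n*δ) - x))) * φ x := h
        _ = q^n * φ x := by rw [hqn]
    calc ∫ r in R..(R+δ), φ (r + n*δ) ≤ ∫ r in R..(R+δ), q^n * φ r :=
          intervalIntegral.integral_mono_on (by linarith) hInt1 hInt2 hmono
      _ = q^n * J := by rw [intervalIntegral.integral_const_mul]
  -- partial sums bound
  have hfin : ∀ N : ℕ, ∫ r in R..(R + N*δ), φ r ≤ (1/(1-q)) * J := by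
    have key : ∀ N : ℕ, ∫ r in R..(R + N*δ), φ r ≤ (∑ n ∈ Finset.range N, q^n) * J := by
      intro N
      induction N with
      | zero => simp
      | succ N ihN =>
        have hadj : (∫ r in R..(R+N*δ), φ r) + ∫ r in (R+N*δ)..(R+(N+1)*δ), φ r
            = ∫ r in R..(R+(N+1)*δ), φ r := by
          apply intervalIntegral.integral_add_adjacent_intervals
          · exact hII R (R+N*δ) hR (by nlinarith [N.cast_nonneg (α := ℝ)])
          · exact hII (R+N*δ) (R+(N+1)*δ) (by nlinarith [N.cast_nonneg (α := ℝ)])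
              (by nlinarith [N.cast_nonneg (α := ℝ)])
        have : ∫ r in R..(R+((N:ℝ)+1)*δ), φ r ≤ (∑ n ∈ Finset.range N, q^n) * J + q^N * J := by
          rw [← hadj]
          exact add_le_add ihN (hpiece N)
        rw [Finset.sum_range_succ, add_mul]
        convert this using 3
        push_cast; ring
    intro N
    refine le_trans (key N) (mul_le_mul_of_nonneg_right ?_ hJ0)
    have hgs : ∑ n ∈ Finset.range N, q^n = (1 - q^N)/(1-q) := by
      rw [geom_sum_eq hq1.ne N, ← neg_div_neg_eq]
      ring_nf
    rw [hgs]
    rw [div_le_div_iff₀ h1q h1q]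
    nlinarith [pow_nonneg hq0.le N]
  -- pass to the limit
  have hb : Filter.Tendsto (fun N : ℕ => R + N*δ) Filter.atTop Filter.atTop :=
    Filter.tendsto_atTop_add_const_left _ R
      (Filter.Tendsto.atTop_mul_const hδ tendsto_natCast_atTop_atTop)
  have hT := MeasureTheory.intervalIntegral_tendsto_integral_Ioi R hIntφ hb
  have hlim : ∫ r in Ioi R, φ r ≤ (1/(1-q)) * J :=
    le_of_tendsto hT (Filter.Eventually.of_forall hfin)
  have e1 : ∫ r in Ioi R, ‖sphH l (Complex.I * k * r)‖^2 = ∫ r in Ioi R, φ r :=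
    setIntegral_congr_fun measurableSet_Ioi hEqOn
  have e2 : ∫ r in R..(R+δ), ‖sphH l (Complex.I * k * r)‖^2 = J := by
    apply intervalIntegral.integral_congr
    intro x hx
    rw [uIcc_of_le (by linarith : R ≤ R+δ)] at hx
    exact hEq x (lt_of_lt_of_le hR hx.1)
  exact ⟨hIntS, by rw [e1, e2]; exact hlim⟩
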